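/- arXiv:2203.14848 — 5 statements merged into one kernel-verified Lean document; each statement's English description precedes it below -/
import Mathlib

section
/- For every α ∈ (0,1) and every β > 0, the dispersion function 𝒟(k) = (α + βk²)·sinh(k) − k·cosh(k) has exactly one root k⋆ in (0,∞), and this root is simple in the sense that the derivative 𝒟′(k⋆) is nonzero (in fact 𝒟′(k⋆) > 0). -/
/-!
Away from `k = 0` we have `𝒟(k) = k² sinh k · (β - ρ(k))` with
`ρ(k) = (k cosh k - α sinh k) / (k² sinh k)`. For `α < 1` the function `ρ` is strictly
decreasing on `(0, ∞)`: the sign of `ρ'` is that of `2α sinh² k - k sinh k cosh k - k²`, which is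
negative by the hyperbolic inequality `2 sinh² k ≤ k sinh k cosh k + k²`; at `t = 2k` this reads
`4 cosh t - 4 ≤ t sinh t + t²`, which follows for `t ≥ 0` by differentiating four times.
Hence `𝒟` has at most one positive root, and at a root `k⋆` the product rule gives
`𝒟'(k⋆) = -k⋆² sinh k⋆ · ρ'(k⋆) > 0`.
A root exists by the intermediate value theorem, since `𝒟 < 0` near `0` and `𝒟 > 0` for large `k`.
-/

/-- The linear dispersion function `𝒟(k) = (α + βk²)·sinh(k) − k·cosh(k)`. -/
noncomputable def disp (α β k : ℝ) : ℝ :=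
  (α + β * k ^ 2) * Real.sinh k - k * Real.cosh k

open Real Set Filter Topology

lemma nonneg_of_hasDerivAt_of_nonneg {f f' : ℝ → ℝ} (hf : ∀ x, HasDerivAt f (f' x) x)
    (h0 : f 0 = 0) (hf' : ∀ x, 0 ≤ x → 0 ≤ f' x) {t : ℝ} (ht : 0 ≤ t) : 0 ≤ f t := by
  have hmono : MonotoneOn f (Ici 0) :=
    monotoneOn_of_hasDerivWithinAt_nonneg (convex_Ici 0)
      (fun x _ ↦ (hf x).continuousAt.continuousWithinAt) (fun x _ ↦ (hf x).hasDerivWithinAt)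
      (fun x hx ↦ hf' x (by rw [interior_Ici] at hx; exact le_of_lt hx))
  simpa [h0] using hmono self_mem_Ici ht ht

lemma sinh_le_mul_cosh {t : ℝ} (ht : 0 ≤ t) : sinh t ≤ t * cosh t :=
  sub_nonneg.1 <| nonneg_of_hasDerivAt_of_nonneg
    (f := fun t ↦ t * cosh t - sinh t) (f' := fun t ↦ t * sinh t)
    (fun x ↦ (((hasDerivAt_id' x).mul (hasDerivAt_cosh x)).sub
      (hasDerivAt_sinh x)).congr_deriv (by ring))
    (by simp) (fun _ hx ↦ mul_nonneg hx (sinh_nonneg_iff.2 hx)) ht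

lemma two_mul_cosh_sub_two_le {t : ℝ} (ht : 0 ≤ t) : 2 * cosh t - 2 ≤ t * sinh t :=
  sub_nonneg.1 <| nonneg_of_hasDerivAt_of_nonneg
    (f := fun t ↦ t * sinh t - (2 * cosh t - 2)) (f' := fun t ↦ t * cosh t - sinh t)
    (fun x ↦ (((hasDerivAt_id' x).mul (hasDerivAt_sinh x)).sub
      (((hasDerivAt_cosh x).const_mul 2).sub_const 2)).congr_deriv (by ring))
    (by simp) (fun _ hx ↦ sub_nonneg.2 (sinh_le_mul_cosh hx)) ht

lemma three_mul_sinh_le {t : ℝ} (ht : 0 ≤ t) : 3 * sinh t ≤ t * cosh t + 2 * t :=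
  sub_nonneg.1 <| nonneg_of_hasDerivAt_of_nonneg
    (f := fun t ↦ t * cosh t + 2 * t - 3 * sinh t)
    (f' := fun t ↦ t * sinh t - (2 * cosh t - 2))
    (fun x ↦ ((((hasDerivAt_id' x).mul (hasDerivAt_cosh x)).add
      ((hasDerivAt_id' x).const_mul 2)).sub ((hasDerivAt_sinh x).const_mul 3)).congr_deriv
        (by ring))
    (by simp) (fun _ hx ↦ sub_nonneg.2 (two_mul_cosh_sub_two_le hx)) ht

lemma four_mul_cosh_sub_four_le {t : ℝ} (ht : 0 ≤ t) :
    4 * cosh t - 4 ≤ t * sinh t + t ^ 2 :=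
  sub_nonneg.1 <| nonneg_of_hasDerivAt_of_nonneg
    (f := fun t ↦ t * sinh t + t ^ 2 - (4 * cosh t - 4))
    (f' := fun t ↦ t * cosh t + 2 * t - 3 * sinh t)
    (fun x ↦ ((((hasDerivAt_id' x).mul (hasDerivAt_sinh x)).add (hasDerivAt_pow 2 x)).sub
      (((hasDerivAt_cosh x).const_mul 4).sub_const 4)).congr_deriv (by ring))
    (by simp) (fun _ hx ↦ sub_nonneg.2 (three_mul_sinh_le hx)) ht

lemma two_mul_sinh_sq_le {k : ℝ} (hk : 0 ≤ k) :
    2 * sinh k ^ 2 ≤ k * sinh k * cosh k + k ^ 2 := by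
  have h := four_mul_cosh_sub_four_le (mul_nonneg zero_le_two hk)
  rw [sinh_two_mul, cosh_two_mul] at h
  nlinarith [cosh_sq_sub_sinh_sq k]

lemma continuous_disp (α β : ℝ) : Continuous (disp α β) := by
  unfold disp; fun_prop

noncomputable def rho (α k : ℝ) : ℝ :=
  (k * cosh k - α * sinh k) / (k ^ 2 * sinh k)

lemma disp_eq_mul_rho (α β : ℝ) {k : ℝ} (hk : 0 < k) :
    disp α β k = k ^ 2 * sinh k * (β - rho α k) := by
  have hs : sinh k ≠ 0 := (sinh_pos_iff.2 hk).ne'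
  unfold disp rho
  field_simp
  ring

lemma rho_eq_of_disp_eq_zero {α β k : ℝ} (hk : 0 < k) (h : disp α β k = 0) : rho α k = β := by
  rw [disp_eq_mul_rho α β hk] at h
  have hs : 0 < sinh k := sinh_pos_iff.2 hk
  have : β - rho α k = 0 := (mul_eq_zero.1 h).resolve_left (mul_pos (pow_pos hk 2) hs).ne'
  linarith

lemma hasDerivAt_rho (α : ℝ) {k : ℝ} (hk : 0 < k) :
    HasDerivAt (rho α)
      (k * (2 * α * sinh k ^ 2 - k * sinh k * cosh k - k ^ 2) / (k ^ 2 * sinh k) ^ 2) k := by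
  have hs : 0 < sinh k := sinh_pos_iff.2 hk
  have hnum : HasDerivAt (fun k ↦ k * cosh k - α * sinh k)
      (1 * cosh k + k * sinh k - α * cosh k) k :=
    ((hasDerivAt_id' k).mul (hasDerivAt_cosh k)).sub ((hasDerivAt_sinh k).const_mul α)
  have hden : HasDerivAt (fun k ↦ k ^ 2 * sinh k) (↑2 * k ^ 1 * sinh k + k ^ 2 * cosh k) k :=
    (hasDerivAt_pow 2 k).mul (hasDerivAt_sinh k)
  refine (hnum.div hden (by positivity)).congr_deriv ?_
  rw [div_eq_div_iff (by positivity) (by positivity)]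
  linear_combination (-(k ^ 2 * sinh k) ^ 2 * k ^ 3) * cosh_sq_sub_sinh_sq k

lemma deriv_rho_neg {α k : ℝ} (hα : α < 1) (hk : 0 < k) : deriv (rho α) k < 0 := by
  rw [(hasDerivAt_rho α hk).deriv]
  have hs : 0 < sinh k := sinh_pos_iff.2 hk
  have hlt : 2 * α * sinh k ^ 2 < 2 * sinh k ^ 2 := by nlinarith [pow_pos hs 2]
  refine div_neg_of_neg_of_pos (mul_neg_of_pos_of_neg hk ?_) (by positivity)
  linarith [two_mul_sinh_sq_le hk.le]

lemma rho_strictAntiOn {α : ℝ} (hα : α < 1) : StrictAntiOn (rho α) (Ioi 0) :=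
  strictAntiOn_of_deriv_neg (convex_Ioi 0)
    (fun _ hk ↦ (hasDerivAt_rho α hk).continuousAt.continuousWithinAt)
    (fun _ hk ↦ deriv_rho_neg hα (interior_Ioi.subset hk))

lemma deriv_disp_pos_of_disp_eq_zero {α β k : ℝ} (hα : α < 1) (hk : 0 < k)
    (h : disp α β k = 0) : 0 < deriv (disp α β) k := by
  have hs : 0 < sinh k := sinh_pos_iff.2 hk
  have hprod := (((hasDerivAt_pow 2 k).mul (hasDerivAt_sinh k)).mul
    ((hasDerivAt_rho α hk).differentiableAt.hasDerivAt.const_sub β))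
  have heq : (fun x ↦ x ^ 2 * sinh x * (β - rho α x)) =ᶠ[𝓝 k] disp α β :=
    eventually_of_mem (Ioi_mem_nhds hk) fun x hx ↦ (disp_eq_mul_rho α β hx).symm
  rw [(hprod.congr_of_eventuallyEq heq.symm).deriv, rho_eq_of_disp_eq_zero hk h, sub_self,
    mul_zero, zero_add]
  exact mul_pos (mul_pos (pow_pos hk 2) hs) (neg_pos.2 (deriv_rho_neg hα hk))

lemma disp_neg_of_add_mul_sq_lt_one {α β k : ℝ} (hk : 0 < k) (h : α + β * k ^ 2 < 1) :
    disp α β k < 0 := by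
  have hs : 0 < sinh k := sinh_pos_iff.2 hk
  have : (α + β * k ^ 2) * sinh k < sinh k := by nlinarith
  unfold disp
  linarith [sinh_le_mul_cosh hk.le]

lemma disp_pos_of_le_mul {α β k : ℝ} (hk : 1 ≤ k) (h : 2 + |α| ≤ β * k) :
    0 < disp α β k := by
  have hk0 : 0 < k := by linarith
  have hsinh : k < sinh k := self_lt_sinh_iff.2 hk0
  have hcosh : cosh k ≤ sinh k + 1 := by
    linarith [cosh_sub_sinh k, exp_le_one_iff.2 (neg_nonpos.2 hk0.le)]
  have hcoef : k ≤ α + β * k ^ 2 - k := by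
    nlinarith [neg_abs_le α, mul_le_mul_of_nonneg_left h hk0.le, abs_nonneg α]
  unfold disp
  nlinarith [mul_le_mul_of_nonneg_left hcosh hk0.le,
    mul_le_mul_of_nonneg_right hcoef (hk0.trans hsinh).le]

lemma exists_pos_disp_eq_zero {α β : ℝ} (hα : α < 1) (hβ : 0 < β) :
    ∃ k, 0 < k ∧ disp α β k = 0 := by
  set a := √((1 - α) / (2 * β))
  set b := 1 + (2 + |α|) / β
  have ha : 0 < a := sqrt_pos.2 (div_pos (by linarith) (by linarith))
  have hb : 1 ≤ b := le_add_of_nonneg_right (by positivity)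
  have hDa : disp α β a < 0 := by
    refine disp_neg_of_add_mul_sq_lt_one ha ?_
    rw [sq_sqrt (div_pos (by linarith) (by linarith)).le]
    field_simp
    linarith
  have hDb : 0 < disp α β b := by
    refine disp_pos_of_le_mul hb ?_
    rw [mul_add, mul_div_cancel₀ _ hβ.ne']
    linarith
  obtain ⟨k, hk, hk0⟩ := intermediate_value_uIcc (continuous_disp α β).continuousOn
    (mem_uIcc.2 (Or.inl ⟨hDa.le, hDb.le⟩))
  exact ⟨k, (lt_min ha (by linarith)).trans_le hk.1, hk0⟩

theorem stmt_0_general (α β : ℝ) (hα1 : α < 1) (hβ : 0 < β) :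
    ∃ kstar : ℝ, 0 < kstar ∧ disp α β kstar = 0 ∧
      (∀ k : ℝ, 0 < k → disp α β k = 0 → k = kstar) ∧
      0 < deriv (disp α β) kstar := by
  obtain ⟨kstar, hpos, hroot⟩ := exists_pos_disp_eq_zero hα1 hβ
  refine ⟨kstar, hpos, hroot, fun k hk hdisp ↦ ?_, deriv_disp_pos_of_disp_eq_zero hα1 hpos hroot⟩
  exact (rho_strictAntiOn hα1).injOn hk hpos
    (by rw [rho_eq_of_disp_eq_zero hk hdisp, rho_eq_of_disp_eq_zero hpos hroot])

/-- In Region I (`0 < α < 1`, `β > 0`) the dispersion relation has exactly one positive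
root, and this root is simple with `𝒟′(k⋆) > 0`. -/
theorem stmt_0 (α β : ℝ) (hα0 : 0 < α) (hα1 : α < 1) (hβ : 0 < β) :
    ∃ kstar : ℝ, 0 < kstar ∧ disp α β kstar = 0 ∧
      (∀ k : ℝ, 0 < k → disp α β k = 0 → k = kstar) ∧
      0 < deriv (disp α β) kstar :=
  stmt_0_general α β hα1 hβ
end

section
/- For α = 1 and every β with 0 < β < 1/3, the dispersion function 𝒟(k) = (1 + βk²)·sinh(k) − k·cosh(k) has exactly one root k⋆ in (0,∞), and this root is simple (𝒟′(k⋆) ≠ 0). -/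
/-!
For `k > 0`, `𝒟(k) = k² sinh k · (β - R(k))` with `R(k) = (k cosh k - sinh k) / (k² sinh k)`,
so the positive roots are the solutions of `R(k) = β`. The derivative `R'` has the sign of
`2 sinh² k - k² - k sinh k cosh k = -(x² + x sinh x + 4 - 4 cosh x) / 4` with `x = 2k`, and the
latter function of `x` vanishes to second order at `0` with third derivative
`x cosh x - sinh x > 0`. So `R` is strictly decreasing, which gives uniqueness, and at a root
the factorisation gives `𝒟' = -k² sinh k · R' ≠ 0`. Existence follows from the intermediate
value theorem between `arcosh (1 / (3β))`, where `𝒟 < 0`, and `2 / β`, where `𝒟 > 0`.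
-/

open Real Set

lemma pos_of_hasDerivAt_pos {f f' : ℝ → ℝ} (hf : ContinuousOn f (Ici 0))
    (hf' : ∀ x, 0 < x → HasDerivAt f (f' x) x) (hf'_pos : ∀ x, 0 < x → 0 < f' x)
    (h0 : f 0 = 0) {x : ℝ} (hx : 0 < x) : 0 < f x := by
  have hmono : StrictMonoOn f (Ici 0) := by
    refine strictMonoOn_of_deriv_pos (convex_Ici 0) hf fun y hy => ?_
    rw [interior_Ici] at hy
    rw [(hf' y hy).deriv]
    exact hf'_pos y hy
  simpa [h0] using hmono self_mem_Ici hx.le hx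

lemma sinh_lt_mul_cosh {x : ℝ} (hx : 0 < x) : sinh x < x * cosh x := by
  have := pos_of_hasDerivAt_pos (f := fun x => x * cosh x - sinh x)
    (f' := fun x => x * sinh x) (by fun_prop)
    (fun y _ => ((hasDerivAt_id' y |>.fun_mul (hasDerivAt_cosh y)).fun_sub
      (hasDerivAt_sinh y)).congr_deriv (by ring))
    (fun y hy => mul_pos hy (sinh_pos_iff.mpr hy)) (by simp) hx
  simpa using this

lemma cube_div_three_lt_mul_cosh_sub_sinh {x : ℝ} (hx : 0 < x) :
    x ^ 3 / 3 < x * cosh x - sinh x := by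
  have := pos_of_hasDerivAt_pos (f := fun x => x * cosh x - sinh x - x ^ 3 / 3)
    (f' := fun x => x * (sinh x - x)) (by fun_prop)
    (fun y _ => (((hasDerivAt_id' y |>.fun_mul (hasDerivAt_cosh y)).fun_sub
      (hasDerivAt_sinh y)).fun_sub ((hasDerivAt_pow 3 y).div_const 3)).congr_deriv
      (by push_cast; ring))
    (fun y hy => mul_pos hy (sub_pos.mpr (self_lt_sinh_iff.mpr hy))) (by simp) hx
  simpa using this

lemma two_mul_cosh_lt {x : ℝ} (hx : 0 < x) : 2 * cosh x < 2 + x * sinh x := by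
  have := pos_of_hasDerivAt_pos (f := fun x => 2 + x * sinh x - 2 * cosh x)
    (f' := fun x => x * cosh x - sinh x) (by fun_prop)
    (fun y _ => (((hasDerivAt_id' y |>.fun_mul (hasDerivAt_sinh y)).const_add 2).fun_sub
      ((hasDerivAt_cosh y).const_mul 2)).congr_deriv (by ring))
    (fun y hy => sub_pos.mpr (sinh_lt_mul_cosh hy)) (by simp) hx
  simpa using this

lemma three_mul_sinh_lt {x : ℝ} (hx : 0 < x) : 3 * sinh x < 2 * x + x * cosh x := by
  have := pos_of_hasDerivAt_pos (f := fun x => 2 * x + x * cosh x - 3 * sinh x)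
    (f' := fun x => 2 + x * sinh x - 2 * cosh x) (by fun_prop)
    (fun y _ => ((((hasDerivAt_id' y).const_mul 2).fun_add (hasDerivAt_id' y |>.fun_mul
      (hasDerivAt_cosh y))).fun_sub ((hasDerivAt_sinh y).const_mul 3)).congr_deriv (by ring))
    (fun y hy => by linarith [two_mul_cosh_lt hy]) (by simp) hx
  simpa using this

lemma four_mul_cosh_lt {x : ℝ} (hx : 0 < x) : 4 * cosh x < x ^ 2 + x * sinh x + 4 := by
  have := pos_of_hasDerivAt_pos (f := fun x => x ^ 2 + x * sinh x + 4 - 4 * cosh x)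
    (f' := fun x => 2 * x + x * cosh x - 3 * sinh x) (by fun_prop)
    (fun y _ => ((((hasDerivAt_pow 2 y).fun_add (hasDerivAt_id' y |>.fun_mul
      (hasDerivAt_sinh y))).add_const 4).fun_sub ((hasDerivAt_cosh y).const_mul 4)).congr_deriv
      (by push_cast; ring))
    (fun y hy => by linarith [three_mul_sinh_lt hy]) (by simp) hx
  simpa using this

lemma two_mul_sinh_sq_lt {x : ℝ} (hx : 0 < x) :
    2 * sinh x ^ 2 < x ^ 2 + x * sinh x * cosh x := by
  have := four_mul_cosh_lt (mul_pos two_pos hx)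
  rw [cosh_two_mul, sinh_two_mul, cosh_sq] at this
  linarith

lemma sq_mul_sinh_ne_zero {k : ℝ} (hk : k ≠ 0) : k ^ 2 * sinh k ≠ 0 :=
  mul_ne_zero (pow_ne_zero 2 hk) (sinh_ne_zero.mpr hk)

noncomputable def dispRatio (k : ℝ) : ℝ := (k * cosh k - sinh k) / (k ^ 2 * sinh k)

lemma disp_one_eq_mul_dispRatio (β : ℝ) {k : ℝ} (hk : k ≠ 0) :
    disp 1 β k = k ^ 2 * sinh k * (β - dispRatio k) := by
  rw [dispRatio, disp, mul_sub, mul_div_cancel₀ _ (sq_mul_sinh_ne_zero hk)]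
  ring

lemma hasDerivAt_dispRatio {x : ℝ} (hx : x ≠ 0) :
    HasDerivAt dispRatio
      (-(x * (x ^ 2 + x * sinh x * cosh x - 2 * sinh x ^ 2)) / (x ^ 2 * sinh x) ^ 2) x := by
  refine (((hasDerivAt_id' x |>.fun_mul (hasDerivAt_cosh x)).fun_sub (hasDerivAt_sinh x)).fun_div
    ((hasDerivAt_pow 2 x).fun_mul (hasDerivAt_sinh x)) (sq_mul_sinh_ne_zero hx)).congr_deriv ?_
  push_cast
  linear_combination (-x ^ 3 / (x ^ 2 * sinh x) ^ 2) * cosh_sq x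

lemma deriv_dispRatio_neg {x : ℝ} (hx : 0 < x) : deriv dispRatio x < 0 := by
  rw [(hasDerivAt_dispRatio hx.ne').deriv, neg_div, neg_lt_zero]
  have := sub_pos.mpr (two_mul_sinh_sq_lt hx)
  positivity

lemma strictAntiOn_dispRatio : StrictAntiOn dispRatio (Ioi 0) :=
  strictAntiOn_of_deriv_neg (convex_Ioi 0)
    (fun x hx => (hasDerivAt_dispRatio hx.ne').continuousAt.continuousWithinAt)
    (fun x hx => deriv_dispRatio_neg (by simpa using hx))

lemma dispRatio_eq_of_disp_one_eq_zero {β k : ℝ} (hk : k ≠ 0) (hroot : disp 1 β k = 0) :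
    dispRatio k = β := by
  rw [disp_one_eq_mul_dispRatio β hk] at hroot
  exact (sub_eq_zero.mp ((mul_eq_zero.mp hroot).resolve_left (sq_mul_sinh_ne_zero hk))).symm

lemma disp_one_neg_of_cosh_le {β k : ℝ} (hβ : 0 < β) (hk : 0 < k)
    (hcosh : 3 * β * cosh k ≤ 1) : disp 1 β k < 0 :=
  calc disp 1 β k = β * k ^ 2 * sinh k - (k * cosh k - sinh k) := by unfold disp; ring
    _ < β * k ^ 2 * (k * cosh k) - k ^ 3 / 3 :=
      sub_lt_sub (mul_lt_mul_of_pos_left (sinh_lt_mul_cosh hk) (by positivity))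
        (cube_div_three_lt_mul_cosh_sub_sinh hk)
    _ = k ^ 3 / 3 * (3 * β * cosh k - 1) := by ring
    _ ≤ 0 := mul_nonpos_of_nonneg_of_nonpos (by positivity) (by linarith)

lemma disp_one_pos_of_two_le_mul {β k : ℝ} (hk : 0 < k) (hβk : 2 ≤ β * k) :
    0 < disp 1 β k := by
  have hcosh : cosh k < sinh k + 1 := by
    linarith [cosh_sub_sinh k, exp_lt_one_iff.mpr (neg_lt_zero.mpr hk)]
  have hsinh : k < sinh k := self_lt_sinh_iff.mpr hk
  calc 0 < (sinh k - k) + k * sinh k := by nlinarith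
    _ < sinh k + β * k * k * sinh k - k * cosh k := by
      have hS : 0 < k * sinh k := by positivity
      nlinarith [mul_lt_mul_of_pos_left hcosh hk, mul_le_mul_of_nonneg_right hβk hS.le]
    _ = disp 1 β k := by unfold disp; ring

lemma deriv_disp_one_of_root {β k : ℝ} (hk : 0 < k) (hroot : disp 1 β k = 0) :
    deriv (disp 1 β) k = -(k ^ 2 * sinh k) * deriv dispRatio k := by
  have hfactor : disp 1 β =ᶠ[nhds k] fun x => x ^ 2 * sinh x * (β - dispRatio x) :=
    (eventually_ne_nhds hk.ne').mono fun x hx => disp_one_eq_mul_dispRatio β hx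
  have hR := hasDerivAt_dispRatio hk.ne'
  rw [hfactor.deriv_eq, (((hasDerivAt_pow 2 k).fun_mul (hasDerivAt_sinh k)).fun_mul
    (hR.const_sub β)).deriv, dispRatio_eq_of_disp_one_eq_zero hk.ne' hroot, hR.deriv]
  ring

/-- For `α = 1` and `0 < β < 1/3` the dispersion relation has exactly one positive root,
and this root is simple. -/
theorem stmt_2 (β : ℝ) (hβ0 : 0 < β) (hβ1 : β < 1 / 3) :
    ∃ kstar : ℝ, 0 < kstar ∧ disp 1 β kstar = 0 ∧
      (∀ k : ℝ, 0 < k → disp 1 β k = 0 → k = kstar) ∧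
      deriv (disp 1 β) kstar ≠ 0 := by
  have hc : 1 < 1 / (3 * β) := by rw [lt_div_iff₀ (by positivity)]; linarith
  have hk₁ : 0 < arcosh (1 / (3 * β)) := arcosh_pos hc
  have hk₂ : 0 < 2 / β := by positivity
  have hneg : disp 1 β (arcosh (1 / (3 * β))) < 0 :=
    disp_one_neg_of_cosh_le hβ0 hk₁
      (by rw [cosh_arcosh hc.le, mul_one_div_cancel (by positivity)])
  have hpos : 0 < disp 1 β (2 / β) :=
    disp_one_pos_of_two_le_mul hk₂ (by rw [mul_div_cancel₀ 2 hβ0.ne'])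
  obtain ⟨kstar, hmem, hroot⟩ := intermediate_value_uIcc
    (by unfold disp; fun_prop : Continuous (disp 1 β)).continuousOn
    (mem_uIcc_of_le hneg.le hpos.le)
  have hkstar : 0 < kstar := (lt_inf_iff.mpr ⟨hk₁, hk₂⟩).trans_le hmem.1
  refine ⟨kstar, hkstar, hroot, fun k hk hk0 => ?_, ?_⟩
  · exact strictAntiOn_dispRatio.injOn hk hkstar (by
      rw [dispRatio_eq_of_disp_one_eq_zero hk.ne' hk0,
        dispRatio_eq_of_disp_one_eq_zero hkstar.ne' hroot])
  · rw [deriv_disp_one_of_root hkstar hroot]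
    exact mul_ne_zero (neg_ne_zero.mpr (by positivity)) (deriv_dispRatio_neg hkstar).ne
end

section
/- For every s > 0, set α(s) = s²/(2 sinh²(s)) + s/(2 tanh(s)) and β(s) = −1/(2 sinh²(s)) + 1/(2 s tanh(s)), and let 𝒟(k) = (α(s) + β(s)k²)·sinh(k) − k·cosh(k). Then 𝒟(s) = 0 and 𝒟′(s) = 0, and s is the only root of 𝒟 in (0,∞); that is, on the curve Γ the dispersion relation has exactly one positive root, which is a double root. -/
open Real Set
open scoped Nat

lemma taylor_coeff_nonneg (n : ℕ) :
    0 ≤ ((9 : ℝ) ^ (n + 1) - 1) / 4 - (2 * n + 2) * (4 * n + 1) := by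
  induction n with
  | zero => norm_num
  | succ n ih => push_cast; rw [pow_succ]; nlinarith

lemma taylor_term_eq (x : ℝ) (n : ℕ) :
    ((3 * x) ^ (2 * (n + 1)) / (2 * (n + 1))! - x ^ (2 * (n + 1)) / (2 * (n + 1))!) / 4
      + x * (x ^ (2 * n + 1) / (2 * n + 1)!) - 2 * x ^ 2 * (x ^ (2 * n) / (2 * n)!)
      = x ^ (2 * n + 2) / (2 * n + 2)! *
          (((9 : ℝ) ^ (n + 1) - 1) / 4 - (2 * n + 2) * (4 * n + 1)) := by
  rw [mul_pow, pow_mul 3, show 2 * (n + 1) = 2 * n + 1 + 1 by ring, Nat.factorial_succ,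
    Nat.factorial_succ]
  push_cast
  field_simp
  ring

lemma two_mul_sq_mul_cosh_lt {x : ℝ} (hx : 0 < x) :
    2 * x ^ 2 * cosh x < sinh x ^ 2 * cosh x + x * sinh x := by
  have hcube := ((hasSum_cosh (3 * x)).sub (hasSum_cosh x)).div_const 4
  rw [show (cosh (3 * x) - cosh x) / 4 = sinh x ^ 2 * cosh x by
    rw [cosh_three_mul, sinh_sq]; ring] at hcube
  have hshift := (hasSum_nat_add_iff' 1).mpr hcube
  simp only [Finset.range_one, Finset.sum_singleton, mul_zero, pow_zero, Nat.factorial_zero,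
    Nat.cast_one, div_one, sub_self, zero_div, sub_zero] at hshift
  have hseries :=
    (hshift.add ((hasSum_sinh x).mul_left x)).sub ((hasSum_cosh x).mul_left (2 * x ^ 2))
  simp only [taylor_term_eq] at hseries
  have hterm_nonneg : ∀ n : ℕ, 0 ≤ x ^ (2 * n + 2) / (2 * n + 2)! *
      (((9 : ℝ) ^ (n + 1) - 1) / 4 - (2 * n + 2) * (4 * n + 1)) :=
    fun n => mul_nonneg (by positivity) (taylor_coeff_nonneg n)
  have := hasSum_lt (i := 2) hterm_nonneg (mul_pos (by positivity) (by norm_num)) hasSum_zero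
    hseries
  linarith

noncomputable def dispPhi (k : ℝ) : ℝ :=
  (sinh k * cosh k - k) / (k * sinh k ^ 2)

lemma hasDerivAt_dispPhi {x : ℝ} (hx : x ≠ 0) :
    HasDerivAt dispPhi
      (-(sinh x ^ 2 * cosh x + x * sinh x - 2 * x ^ 2 * cosh x) / (x ^ 2 * sinh x ^ 3)) x := by
  have hsinh : sinh x ≠ 0 := sinh_ne_zero.mpr hx
  have hnum := ((hasDerivAt_sinh x).mul (hasDerivAt_cosh x)).sub (hasDerivAt_id' x)
  have hden := (hasDerivAt_id' x).mul ((hasDerivAt_sinh x).pow 2)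
  refine (hnum.div hden (by simp [hx, hsinh])).congr_deriv ?_
  simp only [Pi.mul_apply, Pi.sub_apply, Pi.pow_apply]
  field_simp
  linear_combination -(x * sinh x ^ 2) * cosh_sq x

lemma strictAntiOn_dispPhi : StrictAntiOn dispPhi (Ioi 0) := by
  refine strictAntiOn_of_deriv_neg (convex_Ioi 0)
    (fun x hx => (hasDerivAt_dispPhi hx.ne').continuousAt.continuousWithinAt)
    (fun x hx => ?_)
  rw [interior_Ioi] at hx
  have hsinh : 0 < sinh x := sinh_pos_iff.mpr hx
  rw [(hasDerivAt_dispPhi hx.ne').deriv]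
  exact div_neg_of_neg_of_pos (by linarith [two_mul_sq_mul_cosh_lt hx])
    (mul_pos (pow_pos hx 2) (pow_pos hsinh 3))

noncomputable def reducedDisp (α β k : ℝ) : ℝ :=
  α + β * k ^ 2 - k * cosh k / sinh k

lemma disp_eq_sinh_mul_reducedDisp (α β x : ℝ) : disp α β x = sinh x * reducedDisp α β x := by
  rcases eq_or_ne x 0 with rfl | hx
  · simp [disp]
  · have hsinh : sinh x ≠ 0 := sinh_ne_zero.mpr hx
    rw [disp, reducedDisp]
    field_simp

lemma hasDerivAt_reducedDisp (α β : ℝ) {x : ℝ} (hx : x ≠ 0) :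
    HasDerivAt (reducedDisp α β) (x * (2 * β - dispPhi x)) x := by
  have hsinh : sinh x ≠ 0 := sinh_ne_zero.mpr hx
  refine ((((hasDerivAt_pow 2 x).const_mul β).const_add α).sub
    (((hasDerivAt_id' x).mul (hasDerivAt_cosh x)).div (hasDerivAt_sinh x) hsinh)).congr_deriv ?_
  simp only [dispPhi, Pi.mul_apply]
  field_simp
  linear_combination x * cosh_sq x

lemma eq_of_apply_eq_of_deriv_sign {f f' : ℝ → ℝ} {a s k : ℝ}
    (hf : ∀ x ∈ Ioi a, HasDerivAt f (f' x) x) (hneg : ∀ x ∈ Ioo a s, f' x < 0)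
    (hpos : ∀ x ∈ Ioi s, 0 < f' x) (hs : a < s) (hk : a < k) (hfk : f k = f s) : k = s := by
  have hcont : ∀ {b c}, a < b → ContinuousOn f (Icc b c) := fun hb x hx =>
    (hf x (hb.trans_le hx.1)).continuousAt.continuousWithinAt
  rcases lt_trichotomy k s with hlt | heq | hgt
  · have hanti : StrictAntiOn f (Icc k s) := by
      refine strictAntiOn_of_deriv_neg (convex_Icc k s) (hcont hk) (fun x hx => ?_)
      rw [interior_Icc] at hx
      rw [(hf x (hk.trans hx.1)).deriv]
      exact hneg x ⟨hk.trans hx.1, hx.2⟩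
    exact absurd hfk (hanti (left_mem_Icc.2 hlt.le) (right_mem_Icc.2 hlt.le) hlt).ne'
  · exact heq
  · have hmono : StrictMonoOn f (Icc s k) := by
      refine strictMonoOn_of_deriv_pos (convex_Icc s k) (hcont hs) (fun x hx => ?_)
      rw [interior_Icc] at hx
      rw [(hf x (hs.trans hx.1)).deriv]
      exact hpos x hx.1
    exact absurd hfk (hmono (left_mem_Icc.2 hgt.le) (right_mem_Icc.2 hgt.le) hgt).ne'

/-- On the curve `Γ` the dispersion relation has exactly one positive root `s`,
which is a double root: `𝒟(s) = 0` and `𝒟′(s) = 0`. -/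
theorem stmt_3 (s : ℝ) (hs : 0 < s) (α β : ℝ)
    (hα : α = s ^ 2 / (2 * Real.sinh s ^ 2) + s / (2 * Real.tanh s))
    (hβ : β = -1 / (2 * Real.sinh s ^ 2) + 1 / (2 * s * Real.tanh s)) :
    disp α β s = 0 ∧ deriv (disp α β) s = 0 ∧
      ∀ k : ℝ, 0 < k → disp α β k = 0 → k = s := by
  have hsinh : sinh s ≠ 0 := (sinh_pos_iff.mpr hs).ne'
  have hG : reducedDisp α β s = 0 := by
    rw [reducedDisp, hα, hβ, tanh_eq_sinh_div_cosh]
    field_simp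
    ring
  have hβφ : 2 * β = dispPhi s := by
    rw [hβ, dispPhi, tanh_eq_sinh_div_cosh]
    field_simp
    ring
  have hG' : ∀ x ∈ Ioi 0, HasDerivAt (reducedDisp α β) (x * (2 * β - dispPhi x)) x :=
    fun x hx => hasDerivAt_reducedDisp α β hx.ne'
  have hdisp : disp α β = fun x => sinh x * reducedDisp α β x :=
    funext (disp_eq_sinh_mul_reducedDisp α β)
  refine ⟨by simp [hdisp, hG], ?_, fun k hk hk0 => ?_⟩
  · have hderiv : HasDerivAt (fun x => sinh x * reducedDisp α β x) _ s :=
      (hasDerivAt_sinh s).mul (hG' s hs)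
    rw [hdisp, hderiv.deriv, hG, hβφ]
    ring
  · have hGk : reducedDisp α β k = 0 := by
      rw [disp_eq_sinh_mul_reducedDisp] at hk0
      exact (mul_eq_zero.mp hk0).resolve_left (sinh_pos_iff.mpr hk).ne'
    refine eq_of_apply_eq_of_deriv_sign hG' (fun x hx => ?_) (fun x hx => ?_) hs hk
      (hGk.trans hG.symm)
    · rw [hβφ]
      exact mul_neg_of_pos_of_neg hx.1 (sub_neg.2 (strictAntiOn_dispPhi hx.1 hs hx.2))
    · rw [hβφ]
      exact mul_pos (hs.trans hx) (sub_pos.2 (strictAntiOn_dispPhi hs (hs.trans hx) hx))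
end

section
/- Let α > 0, β > 0 and k⋆ > 0 satisfy 𝒟(k⋆) = 0 and 𝒟(2k⋆) ≠ 0, where 𝒟(k) = (α + βk²)·sinh(k) − k·cosh(k). Set σ = tanh(k⋆), T̃ = βk⋆²/α, c(k⋆) = −1 − k⋆·(cosh(2k⋆) + 2)/𝒟(2k⋆), and m̃₂₁⁽²⁾ = −(9αβ + 16)k⋆ + 12αβk⋆·cosh(2k⋆) − 3αβk⋆·cosh(4k⋆) + 8α(2c(k⋆) − 1)·sinh(2k⋆) + 4α(c(k⋆) + 2)·sinh(4k⋆). Then σ² − T̃(3 − σ²) ≠ 0 and m̃₂₁⁽²⁾ = [8k⋆/((1 + T̃)²(1 − σ²)²)] · [1/(σ² − T̃(3 − σ²))] · (a₃T̃³ + a₂T̃² + a₁T̃ + a₀), where a₃ = −2σ⁶ + 10σ⁴ − 14σ² + 6, a₂ = −6σ⁶ + 30σ⁴ − 55σ² + 33, a₁ = −6σ⁶ + 33σ⁴ − 62σ² + 36, a₀ = −2σ⁶ + 13σ⁴ − 12σ² + 9. -/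
/-!
Write `σ = tanh k⋆`. The double-angle formulas make `sinh` and `cosh` of `2k⋆` and `4k⋆`
rational functions of `σ`, and the dispersion relation `𝒟(k⋆) = 0` reads `α(1 + T̃)σ = k⋆`.
Substituting, `𝒟(2k⋆) = -2ασ(σ² - T̃(3 - σ²))/(1 - σ²)`, so the denominator
`σ² - T̃(3 - σ²)` is nonzero precisely because `𝒟(2k⋆) ≠ 0`, and `m̃₂₁⁽²⁾` becomes a rational
function of `σ`, `T̃` and `k⋆`, whose factorization is a polynomial identity.
-/

namespace Real

lemma tanh_pos {x : ℝ} (hx : 0 < x) : 0 < tanh x := by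
  rw [tanh_eq_sinh_div_cosh]
  exact div_pos (sinh_pos_iff.mpr hx) (cosh_pos x)

lemma one_sub_tanh_sq_pos (x : ℝ) : 0 < 1 - tanh x ^ 2 :=
  sub_pos.mpr (tanh_sq_lt_one x)

lemma sinh_eq_tanh_mul_cosh (x : ℝ) : sinh x = tanh x * cosh x := by
  rw [tanh_eq_sinh_div_cosh, div_mul_cancel₀ _ (cosh_pos x).ne']

lemma cosh_sq_mul_one_sub_tanh_sq (x : ℝ) : cosh x ^ 2 * (1 - tanh x ^ 2) = 1 := by
  have := cosh_pos x
  rw [tanh_eq_sinh_div_cosh]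
  field_simp
  linear_combination cosh_sq_sub_sinh_sq x

lemma sinh_two_mul_eq_tanh (x : ℝ) : sinh (2 * x) = 2 * tanh x / (1 - tanh x ^ 2) := by
  rw [eq_div_iff (one_sub_tanh_sq_pos x).ne', sinh_two_mul, sinh_eq_tanh_mul_cosh]
  linear_combination 2 * tanh x * cosh_sq_mul_one_sub_tanh_sq x

lemma cosh_two_mul_eq_tanh (x : ℝ) :
    cosh (2 * x) = (1 + tanh x ^ 2) / (1 - tanh x ^ 2) := by
  rw [eq_div_iff (one_sub_tanh_sq_pos x).ne', cosh_two_mul, sinh_eq_tanh_mul_cosh]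
  linear_combination (1 + tanh x ^ 2) * cosh_sq_mul_one_sub_tanh_sq x

end Real

open Real

lemma disp_eq_cosh_mul (α β k : ℝ) :
    disp α β k = cosh k * ((α + β * k ^ 2) * tanh k - k) := by
  rw [disp, tanh_eq_sinh_div_cosh]
  field_simp [(cosh_pos k).ne']

lemma disp_eq_zero_iff {α β k : ℝ} : disp α β k = 0 ↔ (α + β * k ^ 2) * tanh k = k := by
  rw [disp_eq_cosh_mul, mul_eq_zero, sub_eq_zero, or_iff_right (cosh_pos k).ne']

lemma disp_two_mul_of_disp_eq_zero {α β k : ℝ} (h : disp α β k = 0) :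
    disp α β (2 * k) =
      -2 * tanh k * (α * tanh k ^ 2 - β * k ^ 2 * (3 - tanh k ^ 2)) / (1 - tanh k ^ 2) := by
  have hroot := disp_eq_zero_iff.mp h
  rw [disp, sinh_two_mul_eq_tanh, cosh_two_mul_eq_tanh]
  field_simp [(one_sub_tanh_sq_pos k).ne']
  linear_combination (1 + tanh k ^ 2) * hroot

/-- Factorization of the coefficient `m̃₂₁⁽²⁾` in terms of `σ = tanh k⋆` and
`T̃ = βk⋆²/α`. -/
theorem stmt_6 (α β kstar : ℝ) (hα : 0 < α) (hβ : 0 < β) (hk : 0 < kstar)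
    (hroot : disp α β kstar = 0) (h2k : disp α β (2 * kstar) ≠ 0)
    (σ T c m a0 a1 a2 a3 : ℝ)
    (hσ : σ = Real.tanh kstar)
    (hT : T = β * kstar ^ 2 / α)
    (hc : c = -1 - kstar * (Real.cosh (2 * kstar) + 2) / disp α β (2 * kstar))
    (hm : m = -(9 * α * β + 16) * kstar + 12 * α * β * kstar * Real.cosh (2 * kstar)
        - 3 * α * β * kstar * Real.cosh (4 * kstar)
        + 8 * α * (2 * c - 1) * Real.sinh (2 * kstar)
        + 4 * α * (c + 2) * Real.sinh (4 * kstar))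
    (ha3 : a3 = -2 * σ ^ 6 + 10 * σ ^ 4 - 14 * σ ^ 2 + 6)
    (ha2 : a2 = -6 * σ ^ 6 + 30 * σ ^ 4 - 55 * σ ^ 2 + 33)
    (ha1 : a1 = -6 * σ ^ 6 + 33 * σ ^ 4 - 62 * σ ^ 2 + 36)
    (ha0 : a0 = -2 * σ ^ 6 + 13 * σ ^ 4 - 12 * σ ^ 2 + 9) :
    σ ^ 2 - T * (3 - σ ^ 2) ≠ 0 ∧
      m = (8 * kstar / ((1 + T) ^ 2 * (1 - σ ^ 2) ^ 2)) *
          (1 / (σ ^ 2 - T * (3 - σ ^ 2))) *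
          (a3 * T ^ 3 + a2 * T ^ 2 + a1 * T + a0) := by
  have hβT : β * kstar ^ 2 = α * T := by rw [hT]; field_simp
  have hD := disp_two_mul_of_disp_eq_zero hroot
  rw [hβT, ← hσ, show α * σ ^ 2 - α * T * (3 - σ ^ 2) = α * (σ ^ 2 - T * (3 - σ ^ 2)) by ring]
    at hD
  have hE : σ ^ 2 - T * (3 - σ ^ 2) ≠ 0 := by
    rintro hE
    exact h2k (by rw [hD, hE]; simp)
  refine ⟨hE, ?_⟩
  have hroot' : α * (1 + T) * σ = kstar := by
    rw [hσ]; linear_combination disp_eq_zero_iff.mp hroot - tanh kstar * hβT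
  have hσ0 : σ ≠ 0 := hσ ▸ (tanh_pos hk).ne'
  have hσ1 : 1 - σ ^ 2 ≠ 0 := hσ ▸ (one_sub_tanh_sq_pos kstar).ne'
  have hT1 : 1 + T ≠ 0 := by rw [hT]; positivity
  have hαT : α = kstar / ((1 + T) * σ) := by rw [← hroot']; field_simp
  have hβα : β = α * T / kstar ^ 2 := by rw [← hβT]; field_simp
  have hsinh4 : sinh (4 * kstar) = 2 * sinh (2 * kstar) * cosh (2 * kstar) := by
    rw [← sinh_two_mul, ← mul_assoc]; norm_num
  have hcosh4 : cosh (4 * kstar) = cosh (2 * kstar) ^ 2 + sinh (2 * kstar) ^ 2 := by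
    rw [← cosh_two_mul, ← mul_assoc]; norm_num
  rw [hm, hc, hD, hsinh4, hcosh4, sinh_two_mul_eq_tanh kstar, cosh_two_mul_eq_tanh kstar, ← hσ,
    ha3, ha2, ha1, ha0, hβα, hαT]
  field_simp
  ring
end

section
/- (Fredholm solvability condition.) Let α, β be real and k⋆ > 0 with 𝒟(k⋆) = 0, where 𝒟(k) = (α + βk²)·sinh(k) − k·cosh(k). Let F₃ : [0,1] → ℝ be continuous, let f₃, g₃, η₃₁ be real numbers, and let φ₃₁ : [0,1] → ℝ be twice continuously differentiable with: −k⋆²·φ₃₁(y) + φ₃₁″(y) = F₃(y) for y ∈ (0,1), (α + βk⋆²)·η₃₁ − k⋆·φ₃₁(1) = g₃, φ₃₁′(0) = 0, and φ₃₁′(1) − k⋆·η₃₁ = f₃. Then f₃·cosh(k⋆) + g₃·sinh(k⋆) = ∫₀¹ F₃(y)·cosh(k⋆y) dy. -/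
/-!
Pair the equation `φ'' - k²φ = F` with `cosh (k y)`, which spans the kernel of the adjoint
problem: the Wronskian `φ' cosh (k y) - k φ sinh (k y)` of `φ` and `cosh (k ·)` has derivative
`F y cosh (k y)`, so the integral is the difference of its boundary values. At `y = 0` it vanishes
by `φ'(0) = 0`; at `y = 1` the boundary conditions and `𝒟(k⋆) = 0` turn it into
`f₃ cosh k⋆ + g₃ sinh k⋆`.
-/

open Real Set

noncomputable def coshWronskian (k : ℝ) (φ φ' : ℝ → ℝ) (y : ℝ) : ℝ :=
  φ' y * cosh (k * y) - k * φ y * sinh (k * y)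

theorem hasDerivAt_coshWronskian {k y φ'' : ℝ} {φ φ' : ℝ → ℝ}
    (hφ : HasDerivAt φ (φ' y) y) (hφ' : HasDerivAt φ' φ'' y) :
    HasDerivAt (coshWronskian k φ φ') ((φ'' - k ^ 2 * φ y) * cosh (k * y)) y := by
  have hky : HasDerivAt (fun z => k * z) k y := by simpa using (hasDerivAt_id y).const_mul k
  refine ((hφ'.mul (by simpa [mul_comm] using hky.cosh)).sub
    ((hφ.const_mul k).mul (by simpa [mul_comm] using hky.sinh))).congr_deriv ?_
  ring

theorem continuousOn_coshWronskian {k : ℝ} {s : Set ℝ} {φ φ' : ℝ → ℝ}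
    (hφ : ContinuousOn φ s) (hφ' : ContinuousOn φ' s) :
    ContinuousOn (coshWronskian k φ φ') s := by
  unfold coshWronskian
  fun_prop

theorem integral_mul_cosh_eq_coshWronskian_sub {a b k : ℝ} (hab : a ≤ b) {φ F : ℝ → ℝ}
    (hφ : ContDiffOn ℝ 2 φ (Icc a b)) (hF : ContinuousOn F (Icc a b))
    (hode : ∀ y ∈ Ioo a b,
      -k ^ 2 * φ y + derivWithin (derivWithin φ (Icc a b)) (Icc a b) y = F y) :
    ∫ y in a..b, F y * cosh (k * y)
      = coshWronskian k φ (derivWithin φ (Icc a b)) b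
        - coshWronskian k φ (derivWithin φ (Icc a b)) a := by
  rcases hab.eq_or_lt with rfl | hab
  · simp
  have hφ' : ContDiffOn ℝ 1 (derivWithin φ (Icc a b)) (Icc a b) :=
    hφ.derivWithin (uniqueDiffOn_Icc hab) (by norm_num)
  have hasDerivAt_of_contDiffOn {f : ℝ → ℝ} {n : WithTop ℕ∞} (hf : ContDiffOn ℝ n f (Icc a b))
      (hn : n ≠ 0) {y : ℝ} (hy : y ∈ Ioo a b) : HasDerivAt f (derivWithin f (Icc a b) y) y :=
    ((hf.differentiableOn hn) y (Ioo_subset_Icc_self hy)).hasDerivWithinAt.hasDerivAt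
      (Icc_mem_nhds hy.1 hy.2)
  refine intervalIntegral.integral_eq_sub_of_hasDerivAt_of_le hab.le
    (continuousOn_coshWronskian hφ.continuousOn hφ'.continuousOn) (fun y hy => ?_) ?_
  · refine (hasDerivAt_coshWronskian (hasDerivAt_of_contDiffOn hφ two_ne_zero hy)
      (hasDerivAt_of_contDiffOn hφ' one_ne_zero hy)).congr_deriv ?_
    rw [← hode y hy]
    ring
  · refine ContinuousOn.intervalIntegrable ?_
    rw [uIcc_of_le hab.le]
    fun_prop

theorem stmt_16_general (α β kstar : ℝ) (hroot : disp α β kstar = 0)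
    (F₃ : ℝ → ℝ) (hF₃ : ContinuousOn F₃ (Set.Icc 0 1))
    (f₃ g₃ η₃₁ : ℝ) (φ₃₁ : ℝ → ℝ)
    (hφ : ContDiffOn ℝ 2 φ₃₁ (Set.Icc 0 1))
    (hode : ∀ y ∈ Set.Ioo (0 : ℝ) 1,
        -kstar ^ 2 * φ₃₁ y
          + derivWithin (derivWithin φ₃₁ (Set.Icc 0 1)) (Set.Icc 0 1) y = F₃ y)
    (halg : (α + β * kstar ^ 2) * η₃₁ - kstar * φ₃₁ 1 = g₃)
    (hbc0 : derivWithin φ₃₁ (Set.Icc 0 1) 0 = 0)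
    (hbc1 : derivWithin φ₃₁ (Set.Icc 0 1) 1 - kstar * η₃₁ = f₃) :
    f₃ * Real.cosh kstar + g₃ * Real.sinh kstar
      = ∫ y in (0 : ℝ)..1, F₃ y * Real.cosh (kstar * y) := by
  rw [integral_mul_cosh_eq_coshWronskian_sub zero_le_one hφ hF₃ hode]
  simp only [coshWronskian, hbc0, mul_zero, mul_one, zero_mul, sinh_zero, sub_zero]
  unfold disp at hroot
  rw [← halg, ← hbc1]
  linear_combination η₃₁ * hroot

/-- Fredholm solvability condition for the third-order system: if `φ₃₁` solves the
nonhomogeneous boundary value problem, then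
`f₃ cosh k⋆ + g₃ sinh k⋆ = ∫₀¹ F₃(y) cosh(k⋆ y) dy`. -/
theorem stmt_16 (α β kstar : ℝ) (hk : 0 < kstar) (hroot : disp α β kstar = 0)
    (F₃ : ℝ → ℝ) (hF₃ : ContinuousOn F₃ (Set.Icc 0 1))
    (f₃ g₃ η₃₁ : ℝ) (φ₃₁ : ℝ → ℝ)
    (hφ : ContDiffOn ℝ 2 φ₃₁ (Set.Icc 0 1))
    (hode : ∀ y ∈ Set.Ioo (0 : ℝ) 1,
        -kstar ^ 2 * φ₃₁ y
          + derivWithin (derivWithin φ₃₁ (Set.Icc 0 1)) (Set.Icc 0 1) y = F₃ y)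
    (halg : (α + β * kstar ^ 2) * η₃₁ - kstar * φ₃₁ 1 = g₃)
    (hbc0 : derivWithin φ₃₁ (Set.Icc 0 1) 0 = 0)
    (hbc1 : derivWithin φ₃₁ (Set.Icc 0 1) 1 - kstar * η₃₁ = f₃) :
    f₃ * Real.cosh kstar + g₃ * Real.sinh kstar
      = ∫ y in (0 : ℝ)..1, F₃ y * Real.cosh (kstar * y) :=
  stmt_16_general α β kstar hroot F₃ hF₃ f₃ g₃ η₃₁ φ₃₁ hφ hode halg hbc0 hbc1
end
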